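/- arXiv:2208.12714 — 4 statements merged into one kernel-verified Lean document; each statement's English description precedes it below -/
import Mathlib

section
/- Let x be a bijection of ZMod n with x(0) = 0 and suppose x(u + t) = x(u) + x(t) for all u, where t divides n and x(t) = j·t with gcd(j, n/t) = 1. Then the inverse bijection x⁻¹ satisfies x⁻¹(t) = j'·t where j' is a multiplicative inverse of j modulo n/t. -/
/-- If `x(t) = j·t` with `j` coprime to `n/t`, then `x⁻¹(t) = j'·t` where
`j'` is a multiplicative inverse of `j` modulo `n/t`. -/
theorem stmt_5 (n t : ℕ) (hn : 0 < n) (ht : 0 < t) (htn : t ∣ n)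
    (x : Equiv.Perm (ZMod n)) (h0 : x 0 = 0)
    (hadd : ∀ u, x (u + (t : ZMod n)) = x u + x (t : ZMod n))
    (j : ℤ) (hjcop : Int.gcd j ((n / t : ℕ) : ℤ) = 1)
    (hjt : x (t : ZMod n) = (j : ZMod n) * (t : ZMod n)) :
    ∃ j' : ℤ, j * j' ≡ 1 [ZMOD ((n / t : ℕ) : ℤ)] ∧
      x.symm (t : ZMod n) = (j' : ZMod n) * (t : ZMod n) := by
  -- x (k * t) = k * x t for all natural k
  have hnat : ∀ m : ℕ, x ((m : ZMod n) * t) = (m : ZMod n) * x t := by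
    intro m
    induction m with
    | zero => simpa using h0
    | succ k ih =>
        push_cast
        rw [add_mul, one_mul, hadd, ih, add_mul, one_mul]
  have hint : ∀ k : ℤ, x ((k : ZMod n) * t) = (k : ZMod n) * x t := by
    intro k
    have h1 : ((k % n : ℤ) : ZMod n) = (k : ZMod n) := by
      simp [ZMod.intCast_zmod_eq_zero_iff_dvd, Int.emod_emod_of_dvd,
        ZMod.intCast_eq_intCast_iff', Int.emod_emod_of_dvd]
    have h2 : ((k % n).toNat : ZMod n) = ((k % n : ℤ) : ZMod n) := by
      rw [← Int.cast_natCast, Int.toNat_of_nonneg (Int.emod_nonneg k (by exact_mod_cast hn.ne'))]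
    rw [← h1, ← h2, hnat]
  -- Bezout
  obtain ⟨c, hc⟩ : ∃ c : ℤ, j * Int.gcdA j ((n / t : ℕ) : ℤ) = 1 + ((n / t : ℕ) : ℤ) * c := by
    have := Int.gcd_eq_gcd_ab j ((n / t : ℕ) : ℤ)
    rw [hjcop] at this
    exact ⟨-Int.gcdB j ((n / t : ℕ) : ℤ), by push_cast at this ⊢; linarith⟩
  refine ⟨Int.gcdA j ((n / t : ℕ) : ℤ), ?_, ?_⟩
  · exact (Int.modEq_iff_dvd.mpr ⟨c, by linarith⟩).symm
  · rw [Equiv.symm_apply_eq, hint, hjt, eq_comm]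
    have hnt : ((n / t : ℕ) : ZMod n) * (t : ZMod n) = 0 := by
      rw [← Nat.cast_mul, Nat.div_mul_cancel htn, ZMod.natCast_self]
    calc ((Int.gcdA j ((n / t : ℕ) : ℤ) : ZMod n)) * ((j : ZMod n) * t)
        = ((j * Int.gcdA j ((n / t : ℕ) : ℤ) : ℤ) : ZMod n) * t := by push_cast; ring
      _ = (t : ZMod n) := by
          rw [hc, Int.cast_add, Int.cast_mul, Int.cast_one, Int.cast_natCast,
            add_mul, one_mul, mul_comm ((n / t : ℕ) : ZMod n) (c : ZMod n), mul_assoc, hnt,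
            mul_zero, add_zero]
end

section
/- Let x be a bijection of ZMod n with x(0) = 0 that is stabilized by shift-by-t (i.e., x(u+t) = x(u)+x(t) for all u), with x(t) = j·t. Suppose there exists s ∈ ZMod n such that x⁻¹(u) = x(u + s) − x(s) for all u. Then j² ≡ 1 (mod n/t). -/
/-- If `x` is shift-by-`t` stabilized with `x(t) = j·t`, and `x⁻¹` lies in the
orbit of `x` (witnessed by `s`), then `j² ≡ 1 (mod n/t)`. -/
theorem stmt_6 (n t : ℕ) (hn : 0 < n) (ht : 0 < t) (htn : t ∣ n)
    (x : Equiv.Perm (ZMod n)) (h0 : x 0 = 0)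
    (hadd : ∀ u, x (u + (t : ZMod n)) = x u + x (t : ZMod n))
    (j : ℤ) (hjt : x (t : ZMod n) = (j : ZMod n) * (t : ZMod n))
    (s : ZMod n) (hs : ∀ u, x.symm u = x (u + s) - x s) :
    j ^ 2 ≡ 1 [ZMOD ((n / t : ℕ) : ℤ)] := by
  -- x (k*t) additivity
  have key : ∀ (k : ℕ) (u : ZMod n),
      x (u + (k : ZMod n) * (t : ZMod n)) = x u + (k : ZMod n) * x (t : ZMod n) := by
    intro k
    induction k with
    | zero => intro u; simp
    | succ k ih =>
      intro u
      push_cast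
      rw [add_mul, one_mul, ← add_assoc, hadd, ih, add_mul, one_mul, add_assoc]
  -- x.symm t = j * t
  have hsymm : x.symm (t : ZMod n) = (j : ZMod n) * (t : ZMod n) := by
    rw [hs, add_comm, hadd, hjt]; ring
  have hxjt : x ((j : ZMod n) * (t : ZMod n)) = (t : ZMod n) := by
    rw [← hsymm, Equiv.apply_symm_apply]
  -- replace j by a natural number m with same cast
  set m : ℕ := (j % (n : ℤ)).toNat with hm
  have hjm : (j : ZMod n) = (m : ZMod n) := by
    have h1 : ((m : ℤ) : ZMod n) = (j : ZMod n) := by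
      rw [hm, Int.toNat_of_nonneg (Int.emod_nonneg _ (by exact_mod_cast hn.ne'))]
      rw [ZMod.intCast_eq_intCast_iff]
      exact Int.emod_emod_of_dvd j dvd_rfl
    exact_mod_cast h1.symm
  have hx2 : x ((j : ZMod n) * (t : ZMod n)) = (j : ZMod n) ^ 2 * (t : ZMod n) := by
    have := key m 0
    rw [zero_add, h0, zero_add] at this
    rw [hjm, this, hjt, ← hjm]; ring
  have heq : ((j ^ 2 - 1 : ℤ) : ZMod n) * (t : ZMod n) = 0 := by
    have : (j : ZMod n) ^ 2 * (t : ZMod n) = (t : ZMod n) := by rw [← hx2, hxjt]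
    push_cast
    rw [sub_mul, one_mul, this, sub_self]
  have hdvd : (n : ℤ) ∣ (j ^ 2 - 1) * (t : ℤ) := by
    rw [← ZMod.intCast_zmod_eq_zero_iff_dvd]
    push_cast
    push_cast at heq
    exact heq
  have hnt : (n : ℤ) = ((n / t : ℕ) : ℤ) * (t : ℤ) := by
    rw [← Nat.cast_mul, Nat.div_mul_cancel htn]
  rw [hnt] at hdvd
  have ht' : (t : ℤ) ≠ 0 := by exact_mod_cast ht.ne'
  have hdvd2 : ((n / t : ℕ) : ℤ) ∣ j ^ 2 - 1 :=
    (mul_dvd_mul_iff_right ht').mp hdvd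
  exact (Int.modEq_iff_dvd.mpr hdvd2).symm
end

section
/- Let x be a bijection of ZMod n with x(0) = 0, stabilized by shift-by-t (x(u+t) = x(u)+x(t) for all u, t dividing n), and suppose x⁻¹(u) = x(u+s) − x(s) for all u, with x(t) + t = u₁·t and x(s) + s = u₂·t in ZMod n (u₁, u₂ integers). Then 2·u₂ ≡ u₁·u₂ (mod n/t); in particular, if i·u₁ ≡ 0 (mod n/t) then 2·i·u₂ ≡ 0 (mod n/t). -/
/-!
Iterating the shift rule gives `x (k t) = k x(t)`. Evaluating the inverse formula at `x(s)` gives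
`s = x(x(s) + s) - x(s) = x(u₂ t) - x(s) = u₂ x(t) - x(s)`, and substituting `x(t) = (u₁ - 1) t`
yields `2 u₂ t = u₁ u₂ t` in `ZMod n`; cancelling the factor `t` leaves a congruence modulo `n / t`.
-/

open AddConstMap

theorem Int.modEq_natCast_div_of_mul_modEq {n t : ℕ} (ht : t ≠ 0) (htn : t ∣ n) {a b : ℤ}
    (h : a * t ≡ b * t [ZMOD n]) : a ≡ b [ZMOD (n / t : ℕ)] := by
  rw [Int.modEq_iff_dvd] at h ⊢
  rw [Int.natCast_div,
    Int.div_dvd_iff_dvd_mul (Int.natCast_dvd_natCast.mpr htn) (by exact_mod_cast ht)]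
  rwa [mul_comm, sub_mul]

namespace Equiv.Perm

variable {G : Type*} [AddCommGroup G]

theorem add_apply_eq_zsmul_of_symm_eq (x : Perm G) (h0 : x 0 = 0) {a s : G}
    (hadd : ∀ u, x (u + a) = x u + x a) (hs : ∀ u, x.symm u = x (u + s) - x s) {k : ℤ}
    (hk : x s + s = k • a) : s + x s = k • x a := by
  let f : G →+c[a, x a] G := ⟨x, hadd⟩
  have hxk : x (k • a) = k • x a := by
    simpa [f, h0] using AddConstMapClass.map_zsmul_const f k
  have hsymm := hs (x s)
  rw [Equiv.symm_apply_apply, hk, hxk] at hsymm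
  exact eq_sub_iff_add_eq.mp hsymm

end Equiv.Perm

theorem stmt_8_general (n t : ℕ) (ht : 0 < t) (htn : t ∣ n)
    (x : Equiv.Perm (ZMod n)) (h0 : x 0 = 0)
    (hadd : ∀ u, x (u + (t : ZMod n)) = x u + x (t : ZMod n))
    (s : ZMod n) (hs : ∀ u, x.symm u = x (u + s) - x s)
    (u₁ u₂ : ℤ)
    (hu1 : x (t : ZMod n) + (t : ZMod n) = (u₁ : ZMod n) * (t : ZMod n))
    (hu2 : x s + s = (u₂ : ZMod n) * (t : ZMod n)) :
    (2 * u₂ ≡ u₁ * u₂ [ZMOD ((n / t : ℕ) : ℤ)]) ∧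
    ∀ i : ℤ, i * u₁ ≡ 0 [ZMOD ((n / t : ℕ) : ℤ)] →
      2 * i * u₂ ≡ 0 [ZMOD ((n / t : ℕ) : ℤ)] := by
  have hkey : s + x s = (u₂ : ZMod n) * x t := by
    simpa only [zsmul_eq_mul] using
      x.add_apply_eq_zsmul_of_symm_eq h0 hadd hs (k := u₂) (by rwa [zsmul_eq_mul])
  have hmul : (2 * u₂ * t : ℤ) ≡ u₁ * u₂ * t [ZMOD n] := by
    rw [← ZMod.intCast_eq_intCast_iff]
    push_cast
    linear_combination u₂ * hu1 + hkey - hu2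
  have main := Int.modEq_natCast_div_of_mul_modEq ht.ne' htn hmul
  refine ⟨main, fun i hi => ?_⟩
  calc 2 * i * u₂ = i * (2 * u₂) := by ring
    _ ≡ i * (u₁ * u₂) [ZMOD (n / t : ℕ)] := main.mul_left i
    _ = i * u₁ * u₂ := by ring
    _ ≡ 0 * u₂ [ZMOD (n / t : ℕ)] := hi.mul_right u₂
    _ = 0 := zero_mul u₂

/-- With `x(t)+t = u₁·t` and `x(s)+s = u₂·t`, one has `2u₂ ≡ u₁u₂ (mod n/t)`;
in particular `i·u₁ ≡ 0 (mod n/t)` implies `2·i·u₂ ≡ 0 (mod n/t)`. -/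
theorem stmt_8 (n t : ℕ) (hn : 0 < n) (ht : 0 < t) (htn : t ∣ n)
    (x : Equiv.Perm (ZMod n)) (h0 : x 0 = 0)
    (hadd : ∀ u, x (u + (t : ZMod n)) = x u + x (t : ZMod n))
    (s : ZMod n) (hs : ∀ u, x.symm u = x (u + s) - x s)
    (u₁ u₂ : ℤ)
    (hu1 : x (t : ZMod n) + (t : ZMod n) = (u₁ : ZMod n) * (t : ZMod n))
    (hu2 : x s + s = (u₂ : ZMod n) * (t : ZMod n)) :
    (2 * u₂ ≡ u₁ * u₂ [ZMOD ((n / t : ℕ) : ℤ)]) ∧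
    ∀ i : ℤ, i * u₁ ≡ 0 [ZMOD ((n / t : ℕ) : ℤ)] →
      2 * i * u₂ ≡ 0 [ZMOD ((n / t : ℕ) : ℤ)] :=
  stmt_8_general n t ht htn x h0 hadd s hs u₁ u₂ hu1 hu2
end

section
/- Let n ≥ 12 be divisible by 4, and let x: ZMod n → ZMod n be the bijection with x(0) = 0 determined by x(1) = 5, x(2) = 2, and x(q + 2) = x(q) + 2 for all q (so x is the permutation (1 5 9 ⋯ n−3)(3 7 11 ⋯ n−1) together with fixed even points). Then x is stabilized by shift-by-2 (x(u+2) = x(u) + x(2) for all u), x⁻¹(u) = x(u+1) − x(1) for all u, and with u₂ = (x(1)+1)/2 = 3 and i = n/4, one has i·(x(2)+2)/2 ≡ 0 (mod n/2) while i·u₂ ≢ 0 (mod n/2); hence the indicator ζ^{−i·u₂} (ζ a primitive (n/2)-th root of unity) equals −1. -/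
/-- The explicit permutation `x = (1 5 9 ⋯ n−3)(3 7 11 ⋯ n−1)` of `ZMod n`
(for `4 ∣ n`, `n ≥ 12`) is shift-by-2 stabilized, its inverse lies in its
orbit with witness `s = 1`, and with `i = n/4`, `u₁ = (x(2)+2)/2 = 2`,
`u₂ = (x(1)+1)/2 = 3` one has `i·u₁ ≡ 0 (mod n/2)` but `i·u₂ ≢ 0 (mod n/2)`,
so the indicator `ζ^{−i·u₂}` equals `−1`. -/
theorem stmt_19 (n : ℕ) (hn : 12 ≤ n) (h4 : 4 ∣ n)
    (x : Equiv.Perm (ZMod n)) (h0 : x 0 = 0) (h1 : x 1 = 5) (h2 : x 2 = 2)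
    (hrec : ∀ q : ZMod n, x (q + 2) = x q + 2) :
    (∀ u, x (u + 2) = x u + x 2) ∧
    (∀ u, x.symm u = x (u + 1) - x 1) ∧
    (n / 4 * 2 ≡ 0 [MOD n / 2]) ∧
    ¬ (n / 4 * 3 ≡ 0 [MOD n / 2]) ∧
    (∀ ζ : ℂ, IsPrimitiveRoot ζ (n / 2) →
      ζ ^ (-(((n / 4 : ℕ) : ℤ) * 3)) = -1) := by
  haveI : NeZero n := ⟨by omega⟩
  have key : ∀ m : ℕ, x ((2*m : ℕ) : ZMod n) = ((2*m : ℕ) : ZMod n) ∧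
      x ((2*m+1 : ℕ) : ZMod n) = ((2*m+5 : ℕ) : ZMod n) := by
    intro m
    induction m with
    | zero =>
      constructor
      · simpa using h0
      · simpa using h1
    | succ m ih =>
      constructor
      · have e : ((2*(m+1) : ℕ) : ZMod n) = ((2*m : ℕ) : ZMod n) + 2 := by push_cast; ring
        rw [e, hrec, ih.1]
      · have e : ((2*(m+1)+1 : ℕ) : ZMod n) = ((2*m+1 : ℕ) : ZMod n) + 2 := by push_cast; ring
        rw [e, hrec, ih.2]; push_cast; ring
  have hx : ∀ u : ZMod n, (x u = u ∧ x (u+1) = u + 5) ∨ (x u = u + 4 ∧ x (u+1) = u + 1) := by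
    intro u
    have hu : ((u.val : ℕ) : ZMod n) = u := ZMod.natCast_rightInverse u
    rcases Nat.even_or_odd u.val with ⟨j, hj⟩ | ⟨j, hj⟩
    · left
      have h2j : ((2*j : ℕ) : ZMod n) = u := by
        rw [← hu, hj]; push_cast; ring
      constructor
      · rw [← h2j, (key j).1]
      · have e : u + 1 = ((2*j+1 : ℕ) : ZMod n) := by rw [← h2j]; push_cast; ring
        rw [e, (key j).2, ← h2j]; push_cast; ring
    · right
      have h2j : ((2*j+1 : ℕ) : ZMod n) = u := by
        rw [← hu, hj]
      constructor
      · rw [← h2j, (key j).2]; push_cast; ring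
      · have e : u + 1 = ((2*(j+1) : ℕ) : ZMod n) := by rw [← h2j]; push_cast; ring
        rw [e, (key (j+1)).1]
  obtain ⟨k, rfl⟩ := h4
  have h4k : 4 * k / 4 = k := by omega
  have h2k : 4 * k / 2 = 2 * k := by omega
  have hk3 : 3 ≤ k := by omega
  refine ⟨?_, ?_, ?_, ?_, ?_⟩
  · intro u; rw [hrec, h2]
  · intro u
    rw [Equiv.symm_apply_eq, h1]
    rcases hx u with ⟨hu, hu1⟩ | ⟨hu, hu1⟩
    · rw [hu1, show u + 5 - 5 = u from by ring, hu]
    · rw [hu1, show u + 1 - 5 = u - 4 from by ring]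
      have e1 := hrec (u - 4)
      have e2 := hrec (u - 2)
      rw [show u - 4 + 2 = u - 2 from by ring] at e1
      rw [show u - 2 + 2 = u from by ring] at e2
      rw [e1] at e2
      rw [hu] at e2
      have : x (u - 4) = u := by
        have := e2
        linear_combination -this
      rw [this]
  · rw [h4k, h2k]
    exact (Nat.modEq_zero_iff_dvd).mpr ⟨1, by ring⟩
  · rw [h4k, h2k]
    intro h
    obtain ⟨c, hc⟩ := (Nat.modEq_zero_iff_dvd).mp h
    have hk : 0 < k := by omega
    have h3 : 3 * k = (2 * c) * k := by
      calc 3 * k = k * 3 := by ring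
        _ = 2 * k * c := hc
        _ = (2 * c) * k := by ring
    have := Nat.eq_of_mul_eq_mul_right hk h3
    omega
  · intro ζ hζ
    rw [h2k] at hζ
    rw [h4k]
    have h1' : ζ ^ (2 * k) = 1 := hζ.pow_eq_one
    have hne : ζ ^ k ≠ 1 := hζ.pow_ne_one_of_pos_of_lt (by omega) (by omega)
    have hw : ζ ^ k * ζ ^ k = 1 := by
      rw [← pow_add, ← two_mul]; exact h1'
    have hs : ζ ^ k = -1 := by
      rcases mul_self_eq_one_iff.mp hw with h | h
      · exact absurd h hne
      · exact h
    have e : ζ ^ ((k : ℤ) * 3) = (ζ ^ k) ^ 3 := by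
      rw [show ((k : ℤ) * 3) = ((k * 3 : ℕ) : ℤ) from by push_cast; ring, zpow_natCast, pow_mul]
    rw [zpow_neg, e, hs]
    norm_num
end
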